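/- arXiv:2006.11212 — 2 statements merged into one kernel-verified Lean document; each statement's English description precedes it below -/
import Mathlib

section
/- Let R : [0,T] → ℝ be a nonnegative C¹ function, κ, L₁ : [0,T] → ℝ continuous with κ(s) > 0 and L₁(s) ≥ 0, and β, γ⁻ > 0 constants. Suppose that for all s ∈ [0,T], dR/ds ≤ β L₁(s) √(2 R(s)) − (2κ(s)γ⁻/β) R(s). Then for all s ∈ [0,T]: √(R(s)) ≤ e^{−(γ⁻/β)∫₀ˢ κ(u)du} √(R(0)) + (β/√2) ∫₀ˢ L₁(u) e^{−(γ⁻/β)∫ᵤˢ κ(u')du'} du. -/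
/-!
Regularize: for `η > 0` the function `φ = √(R + η²)` is differentiable even where `R` vanishes,
and from `√(2R) ≤ √2 φ` and `η ≤ φ` the hypothesis gives the linear differential inequality
`φ' ≤ -(γ⁻/β) κ φ + β L₁ / √2 + (γ⁻/β) κ η`. Multiplying by the integrating factor
`exp ((γ⁻/β) ∫₀ᵗ κ)` turns this into monotonicity, whence the variation-of-constants bound
for `φ`; its extra terms are `O(η)`, and letting `η → 0` gives the claim.
-/

open Set

open Real intervalIntegral

theorem hasDerivAt_primitive_of_mem_Ioo {k : ℝ → ℝ} {a b t : ℝ}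
    (hk : ContinuousOn k (Icc a b)) (ht : t ∈ Ioo a b) :
    HasDerivAt (fun x => ∫ u in a..x, k u) (k t) t :=
  integral_hasDerivAt_right
    ((hk.mono (uIcc_subset_Icc (left_mem_Icc.2 (ht.1.trans ht.2).le)
      (Ioo_subset_Icc_self ht))).intervalIntegrable)
    ((hk.mono Ioo_subset_Icc_self).stronglyMeasurableAtFilter isOpen_Ioo t ht)
    (hk.continuousAt (Icc_mem_nhds ht.1 ht.2))

theorem continuousOn_primitive_Icc {k : ℝ → ℝ} {a b : ℝ} (hab : a ≤ b)
    (hk : ContinuousOn k (Icc a b)) :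
    ContinuousOn (fun x => ∫ u in a..x, k u) (Icc a b) := by
  have h := continuousOn_primitive_interval (μ := MeasureTheory.volume) (a := a) (b := b)
    (by rw [uIcc_of_le hab]; exact hk.integrableOn_Icc)
  rwa [uIcc_of_le hab] at h

theorem le_exp_neg_integral_mul_add_integral_of_hasDerivAt {a b : ℝ} {k f φ φ' : ℝ → ℝ}
    (hab : a ≤ b) (hk : ContinuousOn k (Icc a b)) (hf : ContinuousOn f (Icc a b))
    (hφ : ContinuousOn φ (Icc a b)) (hφ' : ∀ t ∈ Ioo a b, HasDerivAt φ (φ' t) t)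
    (hle : ∀ t ∈ Ioo a b, φ' t ≤ -k t * φ t + f t) :
    φ b ≤ exp (-∫ u in a..b, k u) * φ a + ∫ u in a..b, f u * exp (-∫ v in u..b, k v) := by
  set A : ℝ → ℝ := fun t => ∫ u in a..t, k u with hA_def
  have hA : ContinuousOn A (Icc a b) := continuousOn_primitive_Icc hab hk
  have hg : ContinuousOn (fun u => f u * exp (A u)) (Icc a b) := hf.mul hA.rexp
  set F : ℝ → ℝ := fun t => exp (A t) * φ t - ∫ u in a..t, f u * exp (A u)
  have hF : AntitoneOn F (Icc a b) := by
    refine antitoneOn_of_hasDerivWithinAt_nonpos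
      (f' := fun t => exp (A t) * k t * φ t + exp (A t) * φ' t - f t * exp (A t))
      (convex_Icc a b) ((hA.rexp.mul hφ).sub (continuousOn_primitive_Icc hab hg))
      (fun t ht => ?_) (fun t ht => ?_)
    · rw [interior_Icc] at ht
      exact (((hasDerivAt_primitive_of_mem_Ioo hk ht).exp.mul (hφ' t ht)).sub
        (hasDerivAt_primitive_of_mem_Ioo hg ht)).hasDerivWithinAt
    · rw [interior_Icc] at ht
      have := hle t ht
      nlinarith [exp_pos (A t)]
  have hFba : exp (A b) * φ b ≤ φ a + ∫ u in a..b, f u * exp (A u) := by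
    have := hF (left_mem_Icc.2 hab) (right_mem_Icc.2 hab) hab
    simp only [F, hA_def, integral_same, exp_zero, one_mul, sub_zero] at this
    linarith
  have hk_int : ∀ u ∈ uIcc a b, IntervalIntegrable k MeasureTheory.volume a u := fun u hu =>
    (hk.mono (uIcc_subset_Icc (left_mem_Icc.2 hab)
      (by rwa [uIcc_of_le hab] at hu))).intervalIntegrable
  calc φ b = exp (-A b) * (exp (A b) * φ b) := by rw [← mul_assoc, ← exp_add]; simp
    _ ≤ exp (-A b) * (φ a + ∫ u in a..b, f u * exp (A u)) := by gcongr
    _ = _ := by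
      rw [mul_add, ← integral_const_mul]
      congr 1
      refine integral_congr fun u hu => ?_
      rw [mul_left_comm, ← exp_add, ← integral_interval_sub_left (hk_int b right_mem_uIcc)
        (hk_int u hu), neg_sub, neg_add_eq_sub]

theorem div_two_sqrt_add_sq_le {r r' ℓ m η : ℝ} (hr : 0 ≤ r) (hℓ : 0 ≤ ℓ) (hm : 0 ≤ m)
    (hη : 0 < η) (h : r' ≤ ℓ * √(2 * r) - 2 * m * r) :
    r' / (2 * √(r + η ^ 2)) ≤ -m * √(r + η ^ 2) + (ℓ / √2 + m * η) := by
  set φ := √(r + η ^ 2)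
  have hφ : 0 < φ := sqrt_pos.2 (by positivity)
  have hφ_sq : φ ^ 2 = r + η ^ 2 := sq_sqrt (by positivity)
  have hηφ : η ≤ φ := le_sqrt_of_sq_le (le_add_of_nonneg_left hr)
  have h2 : √2 ^ 2 = 2 := sq_sqrt zero_le_two
  have h2r : √(2 * r) ≤ √2 * φ := by
    rw [sqrt_mul zero_le_two]
    exact mul_le_mul_of_nonneg_left (sqrt_le_sqrt (le_add_of_nonneg_right (sq_nonneg η)))
      (sqrt_nonneg 2)
  have hℓ2 : ℓ / √2 * (2 * φ) = ℓ * (√2 * φ) := by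
    rw [div_mul_eq_mul_div, div_eq_iff (by positivity)]
    linear_combination (-ℓ * φ) * h2
  rw [div_le_iff₀ (by positivity)]
  nlinarith [mul_le_mul_of_nonneg_left h2r hℓ,
    mul_le_mul_of_nonneg_left hηφ (mul_nonneg hm hη.le)]

theorem sqrt_add_sq_le_of_hasDerivAt {a b η : ℝ} {R R' ℓ m : ℝ → ℝ} (hab : a ≤ b) (hη : 0 < η)
    (hR : ContinuousOn R (Icc a b)) (hR' : ∀ t ∈ Ioo a b, HasDerivAt R (R' t) t)
    (hR_nonneg : ∀ t ∈ Icc a b, 0 ≤ R t)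
    (hℓ : ContinuousOn ℓ (Icc a b)) (hℓ_nonneg : ∀ t ∈ Icc a b, 0 ≤ ℓ t)
    (hm : ContinuousOn m (Icc a b)) (hm_nonneg : ∀ t ∈ Icc a b, 0 ≤ m t)
    (hle : ∀ t ∈ Ioo a b, R' t ≤ ℓ t * √(2 * R t) - 2 * m t * R t) :
    √(R b + η ^ 2) ≤ exp (-∫ u in a..b, m u) * √(R a + η ^ 2)
      + ∫ u in a..b, (ℓ u / √2 + m u * η) * exp (-∫ v in u..b, m v) := by
  refine le_exp_neg_integral_mul_add_integral_of_hasDerivAt hab hm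
    ((hℓ.div_const _).add (hm.mul continuousOn_const)) (hR.add continuousOn_const).sqrt
    (fun t ht => ((hR' t ht).add_const _).sqrt ?_) (fun t ht => ?_)
  · have := hR_nonneg t (Ioo_subset_Icc_self ht)
    positivity
  · exact div_two_sqrt_add_sq_le (hR_nonneg t (Ioo_subset_Icc_self ht))
      (hℓ_nonneg t (Ioo_subset_Icc_self ht)) (hm_nonneg t (Ioo_subset_Icc_self ht)) hη (hle t ht)

theorem le_of_forall_pos_le_add_mul {x y D : ℝ} (h : ∀ η > 0, x ≤ y + η * D) : x ≤ y := by
  have hlim : Filter.Tendsto (fun η => y + η * D) (nhdsWithin 0 (Ioi 0)) (nhds y) := by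
    have : Continuous fun η : ℝ => y + η * D := by fun_prop
    simpa using (this.tendsto 0).mono_left nhdsWithin_le_nhds
  exact ge_of_tendsto hlim (eventually_nhdsWithin_of_forall h)

theorem sqrt_le_of_hasDerivAt {a b : ℝ} {R R' ℓ m : ℝ → ℝ} (hab : a ≤ b)
    (hR : ContinuousOn R (Icc a b)) (hR' : ∀ t ∈ Ioo a b, HasDerivAt R (R' t) t)
    (hR_nonneg : ∀ t ∈ Icc a b, 0 ≤ R t)
    (hℓ : ContinuousOn ℓ (Icc a b)) (hℓ_nonneg : ∀ t ∈ Icc a b, 0 ≤ ℓ t)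
    (hm : ContinuousOn m (Icc a b)) (hm_nonneg : ∀ t ∈ Icc a b, 0 ≤ m t)
    (hle : ∀ t ∈ Ioo a b, R' t ≤ ℓ t * √(2 * R t) - 2 * m t * R t) :
    √(R b) ≤ exp (-∫ u in a..b, m u) * √(R a)
      + (∫ u in a..b, ℓ u * exp (-∫ v in u..b, m v)) / √2 := by
  set E : ℝ → ℝ := fun u => exp (-∫ v in u..b, m v)
  have hE : ContinuousOn E (uIcc a b) := by
    refine (continuousOn_primitive_interval_left ?_).neg.rexp
    rw [uIcc_of_le hab]
    exact hm.integrableOn_Icc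
  rw [← uIcc_of_le hab] at hℓ hm
  have hℓE : IntervalIntegrable (fun u => ℓ u * E u) MeasureTheory.volume a b :=
    (hℓ.mul hE).intervalIntegrable
  have hmE : IntervalIntegrable (fun u => m u * E u) MeasureTheory.volume a b :=
    (hm.mul hE).intervalIntegrable
  refine le_of_forall_pos_le_add_mul (D := E a + ∫ u in a..b, m u * E u) fun η hη => ?_
  have hsplit : ∫ u in a..b, (ℓ u / √2 + m u * η) * E u
      = (∫ u in a..b, ℓ u * E u) / √2 + η * ∫ u in a..b, m u * E u := by
    rw [← integral_div, ← integral_const_mul, ← integral_add (hℓE.div_const _) (hmE.const_mul _)]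
    congr 1
    ext u
    ring
  have hR_a : √(R a + η ^ 2) ≤ √(R a) + η := by
    have := hR_nonneg a (left_mem_Icc.2 hab)
    rw [sqrt_le_iff]
    constructor
    · positivity
    · nlinarith [sq_sqrt this, sqrt_nonneg (R a)]
  calc √(R b) ≤ √(R b + η ^ 2) := sqrt_le_sqrt (le_add_of_nonneg_right (sq_nonneg η))
    _ ≤ E a * √(R a + η ^ 2) + ∫ u in a..b, (ℓ u / √2 + m u * η) * E u :=
      sqrt_add_sq_le_of_hasDerivAt hab hη hR hR' hR_nonneg (by rwa [uIcc_of_le hab] at hℓ)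
        hℓ_nonneg (by rwa [uIcc_of_le hab] at hm) hm_nonneg hle
    _ ≤ E a * (√(R a) + η) + ((∫ u in a..b, ℓ u * E u) / √2 + η * ∫ u in a..b, m u * E u) := by
      rw [hsplit]
      gcongr
    _ = E a * √(R a) + (∫ u in a..b, ℓ u * E u) / √2 + η * (E a + ∫ u in a..b, m u * E u) := by
      ring

theorem stmt5_general (T β γm : ℝ) (hβ : 0 < β) (hγ : 0 < γm)
    (R R' κ L₁ : ℝ → ℝ)
    (hRderiv : ∀ s ∈ Icc (0:ℝ) T, HasDerivAt R (R' s) s)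
    (hRnn : ∀ s ∈ Icc (0:ℝ) T, 0 ≤ R s)
    (hκcont : ContinuousOn κ (Icc 0 T)) (hκpos : ∀ s ∈ Icc (0:ℝ) T, 0 < κ s)
    (hLcont : ContinuousOn L₁ (Icc 0 T)) (hLnn : ∀ s ∈ Icc (0:ℝ) T, 0 ≤ L₁ s)
    (hineq : ∀ s ∈ Icc (0:ℝ) T,
      R' s ≤ β * L₁ s * Real.sqrt (2 * R s) - (2 * κ s * γm / β) * R s) :
    ∀ s ∈ Icc (0:ℝ) T,
      Real.sqrt (R s) ≤
        Real.exp (-(γm / β) * ∫ u in (0:ℝ)..s, κ u) * Real.sqrt (R 0)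
          + (β / Real.sqrt 2) *
            ∫ u in (0:ℝ)..s, L₁ u * Real.exp (-(γm / β) * ∫ u' in u..s, κ u') := by
  rintro s ⟨hs0, hsT⟩
  have hsub : Icc 0 s ⊆ Icc 0 T := Icc_subset_Icc_right hsT
  have hIoo : Ioo 0 s ⊆ Icc 0 T := Ioo_subset_Icc_self.trans hsub
  have h := sqrt_le_of_hasDerivAt (R' := R') (ℓ := fun u => β * L₁ u)
    (m := fun u => γm / β * κ u) hs0
    (fun t ht => (hRderiv t (hsub ht)).continuousAt.continuousWithinAt)
    (fun t ht => hRderiv t (hIoo ht)) (fun t ht => hRnn t (hsub ht))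
    (continuousOn_const.mul (hLcont.mono hsub)) (fun t ht => mul_nonneg hβ.le (hLnn t (hsub ht)))
    (continuousOn_const.mul (hκcont.mono hsub))
    (fun t ht => mul_nonneg (div_pos hγ hβ).le (hκpos t (hsub ht)).le)
    (fun t ht => (hineq t (hIoo ht)).trans_eq (by ring))
  calc _ ≤ _ := h
    _ = _ := by
      simp only [integral_const_mul, neg_mul, mul_assoc]
      ring

theorem stmt5 (T β γm : ℝ) (hT : 0 < T) (hβ : 0 < β) (hγ : 0 < γm)
    (R R' κ L₁ : ℝ → ℝ)
    (hRderiv : ∀ s ∈ Icc (0:ℝ) T, HasDerivAt R (R' s) s)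
    (hR'cont : ContinuousOn R' (Icc 0 T))
    (hRnn : ∀ s ∈ Icc (0:ℝ) T, 0 ≤ R s)
    (hκcont : ContinuousOn κ (Icc 0 T)) (hκpos : ∀ s ∈ Icc (0:ℝ) T, 0 < κ s)
    (hLcont : ContinuousOn L₁ (Icc 0 T)) (hLnn : ∀ s ∈ Icc (0:ℝ) T, 0 ≤ L₁ s)
    (hineq : ∀ s ∈ Icc (0:ℝ) T,
      R' s ≤ β * L₁ s * Real.sqrt (2 * R s) - (2 * κ s * γm / β) * R s) :
    ∀ s ∈ Icc (0:ℝ) T,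
      Real.sqrt (R s) ≤
        Real.exp (-(γm / β) * ∫ u in (0:ℝ)..s, κ u) * Real.sqrt (R 0)
          + (β / Real.sqrt 2) *
            ∫ u in (0:ℝ)..s, L₁ u * Real.exp (-(γm / β) * ∫ u' in u..s, κ u') :=
  stmt5_general T β γm hβ hγ R R' κ L₁ hRderiv hRnn hκcont hκpos hLcont hLnn hineq
end

section
/- Suppose a nonnegative C¹ function R : [0,∞) → ℝ satisfies dR/ds ≤ β L(s) (2R(s)/κ(s))^{α/2} − (2κ(s)γ⁻/β) R(s), where α ∈ (0,1], β, γ⁻ > 0 are constants, L(s) ≥ 0 is continuous with L(s) → 0 as s → ∞, and κ(s) ≥ κ̄ > 0 is continuous. Then R(s) → 0 as s → ∞. -/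
open Set Filter

theorem stmt17 (α β γm κbar : ℝ)
    (hα : α ∈ Ioc (0:ℝ) 1) (hβ : 0 < β) (hγ : 0 < γm) (hκbar : 0 < κbar)
    (R R' L κ : ℝ → ℝ)
    (hRderiv : ∀ s ∈ Ici (0:ℝ), HasDerivAt R (R' s) s)
    (hR'cont : ContinuousOn R' (Ici 0))
    (hRnn : ∀ s ∈ Ici (0:ℝ), 0 ≤ R s)
    (hLcont : ContinuousOn L (Ici 0))
    (hLnn : ∀ s ∈ Ici (0:ℝ), 0 ≤ L s)
    (hLlim : Tendsto L atTop (nhds 0))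
    (hκcont : ContinuousOn κ (Ici 0))
    (hκlb : ∀ s ∈ Ici (0:ℝ), κbar ≤ κ s)
    (hineq : ∀ s ∈ Ici (0:ℝ),
      R' s ≤ β * L s * (2 * R s / κ s) ^ (α / 2) - (2 * κ s * γm / β) * R s) :
    Tendsto R atTop (nhds 0) := by
  obtain ⟨hα0, hα1⟩ := hα
  obtain ⟨c, hc⟩ : ∃ c : ℝ, c = 2 * κbar * γm / β := ⟨_, rfl⟩
  have hcpos : 0 < c := by rw [hc]; positivity
  have hRcont : ContinuousOn R (Ici 0) := fun s hs =>
    (hRderiv s hs).continuousAt.continuousWithinAt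
  have key : ∀ ε > (0:ℝ), ∀ᶠ s in atTop, R s ≤ ε := by
    intro ε hε
    obtain ⟨δ, hδdef⟩ : ∃ δ : ℝ, δ = min (c * κbar / (4 * β)) (c * ε / (4 * β)) := ⟨_, rfl⟩
    have hδpos : 0 < δ := by
      rw [hδdef]; exact lt_min (by positivity) (by positivity)
    have hd1 : δ ≤ c * κbar / (4 * β) := hδdef ▸ min_le_left _ _
    have hd2 : δ ≤ c * ε / (4 * β) := hδdef ▸ min_le_right _ _
    obtain ⟨N, hN⟩ := Metric.tendsto_atTop.mp hLlim δ hδpos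
    obtain ⟨S, hSdef⟩ : ∃ S : ℝ, S = max N 0 := ⟨_, rfl⟩
    have hS0 : (0:ℝ) ≤ S := hSdef ▸ le_max_right _ _
    have hLδ : ∀ s, S ≤ s → L s ≤ δ := by
      intro s hs
      have h := hN s (le_trans (hSdef ▸ le_max_left N 0) hs)
      rw [Real.dist_eq, sub_zero] at h
      exact (le_abs_self _).trans h.le
    obtain ⟨m, hm⟩ : ∃ m : ℝ, m = c * ε / 4 := ⟨_, rfl⟩
    have hmpos : 0 < m := by rw [hm]; positivity
    -- pointwise derivative bound on the tail where R ≥ ε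
    have hptw : ∀ s, S ≤ s → ε ≤ R s → R' s ≤ -m := by
      intro s hSs hRε
      have hs0 : s ∈ Ici (0:ℝ) := le_trans hS0 hSs
      have hRs : 0 ≤ R s := hRnn s hs0
      have hκs : κbar ≤ κ s := hκlb s hs0
      have hκspos : 0 < κ s := lt_of_lt_of_le hκbar hκs
      have hLs0 : 0 ≤ L s := hLnn s hs0
      have hLsδ : L s ≤ δ := hLδ s hSs
      obtain ⟨x, hx⟩ : ∃ x : ℝ, x = 2 * R s / κbar := ⟨_, rfl⟩
      have hx0 : 0 ≤ x := by rw [hx]; positivity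
      have hα2 : (0:ℝ) ≤ α / 2 := by linarith
      have hbase : 0 ≤ 2 * R s / κ s := div_nonneg (by linarith) hκspos.le
      have h1 : (2 * R s / κ s) ^ (α / 2) ≤ x ^ (α / 2) := by
        rw [hx]
        exact Real.rpow_le_rpow hbase
          (div_le_div_of_nonneg_left (by linarith) hκbar hκs) hα2
      have h2 : x ^ (α / 2) ≤ 1 + x := by
        rcases le_or_gt x 1 with hx1 | hx1
        · have := Real.rpow_le_one hx0 hx1 hα2
          linarith
        · have h3 := Real.rpow_le_rpow_of_exponent_le hx1.le
            (show α / 2 ≤ 1 by linarith)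
          rw [Real.rpow_one] at h3
          linarith
      have hA : β * L s * (2 * R s / κ s) ^ (α / 2) ≤ β * δ * (1 + x) :=
        mul_le_mul (by nlinarith) (h1.trans h2) (Real.rpow_nonneg hbase _)
          (by positivity)
      have hcle : c ≤ 2 * κ s * γm / β := by
        rw [hc]; gcongr
      have hB : c * R s ≤ 2 * κ s * γm / β * R s :=
        mul_le_mul_of_nonneg_right hcle hRs
      have e1 : β * δ ≤ c * ε / 4 := by
        rw [show c * ε / (4 * β) = (c * ε / 4) / β by ring, le_div_iff₀ hβ] at hd2
        linarith
      have e2 : β * δ * x ≤ c / 2 * R s := by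
        rw [show c * κbar / (4 * β) = (c * κbar / 4) / β by ring, le_div_iff₀ hβ] at hd1
        rw [show β * δ * x = (β * δ) * (2 * R s) / κbar by rw [hx]; ring,
          div_le_iff₀ hκbar]
        nlinarith
      have hmain := hineq s hs0
      have hexp : β * δ * (1 + x) = β * δ + β * δ * x := by ring
      have hcε : c * ε ≤ c * R s := mul_le_mul_of_nonneg_left hRε hcpos.le
      rw [hm]
      linarith [hmain, hA, hB, e1, e2, hexp, hcε]
    -- R must dip below ε somewhere on the tail
    have hdip : ∃ t, S ≤ t ∧ R t ≤ ε := by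
      by_contra hcon
      push_neg at hcon
      obtain ⟨T, hT⟩ : ∃ T : ℝ, T = S + R S / m + 1 := ⟨_, rfl⟩
      have hRS0 : 0 ≤ R S := hRnn S hS0
      have hRSm : 0 ≤ R S / m := by positivity
      have hST : S ≤ T := by rw [hT]; linarith
      have hsub : Icc S T ⊆ Ici (0:ℝ) := fun z hz => le_trans hS0 hz.1
      have hcont : ContinuousOn R (Icc S T) := hRcont.mono hsub
      have hdiff : DifferentiableOn ℝ R (interior (Icc S T)) := by
        intro z hz
        rw [interior_Icc] at hz
        exact (hRderiv z (le_trans hS0 hz.1.le)).differentiableAt.differentiableWithinAt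
      have hdb : ∀ z ∈ interior (Icc S T), deriv R z ≤ -m := by
        intro z hz
        rw [interior_Icc] at hz
        rw [(hRderiv z (le_trans hS0 hz.1.le)).deriv]
        exact hptw z hz.1.le (hcon z hz.1.le).le
      have hmvt := (convex_Icc S T).image_sub_le_mul_sub_of_deriv_le hcont hdiff hdb
        S (left_mem_Icc.2 hST) T (right_mem_Icc.2 hST) hST
      have hTm : -m * (T - S) = -(R S) - m := by
        rw [hT]
        field_simp
        ring
      rw [hTm] at hmvt
      have := hcon T hST
      linarith
    obtain ⟨t₀, ht₀S, ht₀⟩ := hdip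
    have ht₀0 : (0:ℝ) ≤ t₀ := le_trans hS0 ht₀S
    have hstay : ∀ s, t₀ ≤ s → R s ≤ ε := by
      intro t ht
      by_contra hgt
      push_neg at hgt
      have htlt : t₀ < t := by
        rcases eq_or_lt_of_le ht with h | h
        · rw [← h] at hgt; linarith
        · exact h
      obtain ⟨A, hA⟩ : ∃ A : Set ℝ, A = Icc t₀ t ∩ R ⁻¹' (Iic ε) := ⟨_, rfl⟩
      have hsub : Icc t₀ t ⊆ Ici (0:ℝ) := fun z hz => le_trans ht₀0 hz.1
      have hAclosed : IsClosed A := hA ▸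
        (hRcont.mono hsub).preimage_isClosed_of_isClosed isClosed_Icc isClosed_Iic
      have hAne : A.Nonempty := ⟨t₀, hA ▸ ⟨⟨le_refl _, htlt.le⟩, ht₀⟩⟩
      have hAbdd : BddAbove A := by
        rw [hA]; exact ⟨t, fun z hz => hz.1.2⟩
      obtain ⟨u, hu⟩ : ∃ u : ℝ, u = sSup A := ⟨_, rfl⟩
      have huA : u ∈ A := hu ▸ hAclosed.csSup_mem hAne hAbdd
      have huA' : u ∈ Icc t₀ t ∩ R ⁻¹' (Iic ε) := hA ▸ huA
      have hut : u ≤ t := huA'.1.2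
      have ht₀u : t₀ ≤ u := huA'.1.1
      have hRu : R u ≤ ε := huA'.2
      have hult : u < t := by
        rcases eq_or_lt_of_le hut with h | h
        · rw [h] at hRu; linarith
        · exact h
      have habove : ∀ z, u < z → z ≤ t → ε < R z := by
        intro z hz1 hz2
        by_contra hcz
        push_neg at hcz
        have hzA : z ∈ A := hA ▸ ⟨⟨le_trans ht₀u hz1.le, hz2⟩, hcz⟩
        have := le_csSup hAbdd hzA
        rw [← hu] at this
        exact absurd this (not_le.2 hz1)
      have hanti : StrictAntiOn R (Icc u t) := by
        apply strictAntiOn_of_deriv_neg (convex_Icc u t)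
          (hRcont.mono fun z hz => le_trans (le_trans ht₀0 ht₀u) hz.1)
        intro z hz
        rw [interior_Icc] at hz
        have hz0 : (0:ℝ) ≤ z := le_trans (le_trans ht₀0 ht₀u) hz.1.le
        rw [(hRderiv z hz0).deriv]
        have := hptw z (le_trans (le_trans ht₀S ht₀u) hz.1.le)
          (habove z hz.1 hz.2.le).le
        linarith
      have := hanti (left_mem_Icc.2 hult.le) (right_mem_Icc.2 hult.le) hult
      linarith
    exact eventually_atTop.2 ⟨t₀, hstay⟩
  rw [NormedAddCommGroup.tendsto_nhds_zero]
  intro ε hε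
  filter_upwards [key (ε / 2) (by linarith), eventually_ge_atTop (0:ℝ)] with s h1 h2
  rw [Real.norm_eq_abs, abs_of_nonneg (hRnn s h2)]
  linarith
end
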